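/- Let c₁,…,cₙ be positive integers. Consider the n×2n integer matrix B whose first row is (c₁, c₂, …, c_r, −c_{r+1}, …, −cₙ, 0, …, 0) and whose i-th row (2 ≤ i ≤ n) has entry 1 in columns i−1 and n+i−1, entry −1 in columns i and n+i, and 0 elsewhere. If c₁ + ⋯ + c_r = c_{r+1} + ⋯ + cₙ, then every row of B is orthogonal to every row of the n×2n matrix Cay(A,−A) = [[1…1, 0…0],[A, −A]] whenever A is a d×n integer matrix whose kernel is spanned by (c₁,…,c_r,−c_{r+1},…,−cₙ)ᵀ and whose row space contains (1,…,1). -/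

import Mathlib

/-! The rows of `B` after the first have equal left and right halves, so they cancel against
the rows `(A | -A)`, and their entries `1, -1` sum to zero against the row `(1 | 0)`. The first row
is `(v | 0)`: it pairs with `(A | -A)` to `A v = 0`, and with `(1 | 0)` to the alternating sum
`∑ cᵢ - ∑ cⱼ`, which vanishes by the balancing condition. -/

open Finset

theorem Finset.sum_ite_neg_eq_zero {ι R : Type*} [Fintype ι] [AddCommGroup R]
    (p : ι → Prop) [DecidablePred p] (f : ι → R)
    (h : ∑ j ∈ univ.filter p, f j = ∑ j ∈ univ.filter (fun j => ¬ p j), f j) :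
    ∑ j, (if p j then f j else -f j) = 0 := by
  rw [sum_ite, sum_neg_distrib, h, add_neg_cancel]

theorem Fin.sum_ite_pred_ite_self_eq_zero {R : Type*} [AddCommGroup R] {n : ℕ} (a : R)
    (i : Fin n) (hi : 1 ≤ (i : ℕ)) :
    ∑ j : Fin n, (if (j : ℕ) = (i : ℕ) - 1 then a else if j = i then -a else 0) = 0 := by
  have hpred : (i : ℕ) - 1 < n := by omega
  have hne : (⟨(i : ℕ) - 1, hpred⟩ : Fin n) ≠ i := Fin.ne_of_val_ne (by dsimp only; omega)
  have hsplit : ∀ j : Fin n,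
      (if (j : ℕ) = (i : ℕ) - 1 then a else if j = i then -a else 0) =
        (if j = ⟨(i : ℕ) - 1, hpred⟩ then a else 0) + (if j = i then -a else 0) := by
    intro j
    by_cases h : j = ⟨(i : ℕ) - 1, hpred⟩
    · subst h; simp [hne]
    · have h' : (j : ℕ) ≠ (i : ℕ) - 1 := fun h' => h (Fin.ext h')
      simp [h, h']
  simp only [hsplit, sum_add_distrib, sum_ite_eq', mem_univ, if_true, add_neg_cancel]

theorem Fintype.sum_sum_type_mul_eq_zero {ι R : Type*} [Fintype ι] [NonUnitalNonAssocRing R]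
    (f g : ι ⊕ ι → R) (hf : ∀ j, f (.inl j) = f (.inr j)) (hg : ∀ j, g (.inr j) = -g (.inl j)) :
    ∑ x, f x * g x = 0 := by
  simp only [Fintype.sum_sum_type, hf, hg, mul_neg, sum_neg_distrib, add_neg_cancel]

/-- The Gale dual matrix B of equation (3.6): every row of B is orthogonal to every
row of the Cayley matrix Cay(A,−A) = [[1…1, 0…0],[A, −A]], whenever A is a d×n integer
matrix whose kernel contains v = (c₁,…,c_r,−c_{r+1},…,−cₙ)ᵀ and whose rational row
space contains (1,…,1), and the two subsums of the positive integers cᵢ agree. -/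
theorem stmt13 (n d r : ℕ) (hn : 2 ≤ n)
    (c : Fin n → ℤ)
    (hsum : ∑ j ∈ univ.filter (fun j : Fin n => (j : ℕ) < r), c j =
            ∑ j ∈ univ.filter (fun j : Fin n => r ≤ (j : ℕ)), c j)
    (v : Fin n → ℤ) (hv : ∀ j, v j = if (j : ℕ) < r then c j else - c j)
    (A : Matrix (Fin d) (Fin n) ℤ)
    (hker : A.mulVec v = 0)
    (B : Matrix (Fin n) (Fin n ⊕ Fin n) ℤ)
    (hB0l : ∀ j, B ⟨0, by omega⟩ (Sum.inl j) = v j)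
    (hB0r : ∀ j, B ⟨0, by omega⟩ (Sum.inr j) = 0)
    (hBl : ∀ i : Fin n, 1 ≤ (i : ℕ) → ∀ j : Fin n,
      B i (Sum.inl j) = if (j : ℕ) = (i : ℕ) - 1 then 1 else if j = i then -1 else 0)
    (hBr : ∀ i : Fin n, 1 ≤ (i : ℕ) → ∀ j : Fin n,
      B i (Sum.inr j) = if (j : ℕ) = (i : ℕ) - 1 then 1 else if j = i then -1 else 0)
    (Cay : Matrix (Unit ⊕ Fin d) (Fin n ⊕ Fin n) ℤ)
    (hCay1l : ∀ u j, Cay (Sum.inl u) (Sum.inl j) = 1)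
    (hCay1r : ∀ u j, Cay (Sum.inl u) (Sum.inr j) = 0)
    (hCayAl : ∀ i j, Cay (Sum.inr i) (Sum.inl j) = A i j)
    (hCayAr : ∀ i j, Cay (Sum.inr i) (Sum.inr j) = - A i j) :
    ∀ (p : Fin n) (q : Unit ⊕ Fin d), ∑ x, B p x * Cay q x = 0 := by
  intro p q
  rcases Nat.eq_zero_or_pos p with hp | hp
  · rw [show p = ⟨0, by omega⟩ from Fin.ext hp, Fintype.sum_sum_type]
    simp only [hB0l, hB0r, zero_mul, sum_const_zero, add_zero]
    rcases q with u | i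
    · have hv_sum : ∑ j, v j = 0 := by
        simp only [hv]
        exact sum_ite_neg_eq_zero _ c (by simpa only [not_lt] using hsum)
      simpa only [hCay1l, mul_one] using hv_sum
    · simpa only [hCayAl, Matrix.mulVec, dotProduct, mul_comm, Pi.zero_apply] using congrFun hker i
  · rcases q with u | i
    · rw [Fintype.sum_sum_type]
      simpa only [hBl p hp, hCay1l, hCay1r, mul_one, mul_zero, sum_const_zero, add_zero]
        using Fin.sum_ite_pred_ite_self_eq_zero (1 : ℤ) p hp
    · exact Fintype.sum_sum_type_mul_eq_zero _ _
        (fun j => by rw [hBl p hp, hBr p hp]) (fun j => by rw [hCayAl, hCayAr])
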